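/- Let G be a finite group, p a prime dividing |G|, H a p-subgroup of G, and N a normal subgroup of G. If H satisfies the Π-property in G, then H ∩ N satisfies the Π-property in G. -/

import Mathlib

open scoped Pointwise

/-- A subgroup `M` of `Q` is a minimal normal subgroup. -/
def IsMinimalNormal {Q : Type*} [Group Q] (M : Subgroup Q) : Prop :=
  M.Normal ∧ M ≠ ⊥ ∧ ∀ N : Subgroup Q, N.Normal → N ≤ M → N = ⊥ ∨ N = M

/-- `L/K` is a chief factor of `G`. -/
def IsChiefFactor {G : Type*} [Group G] (K L : Subgroup G) (hK : K.Normal) : Prop :=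
  L.Normal ∧ K ≤ L ∧ (letI := hK; IsMinimalNormal (L.map (QuotientGroup.mk' K)))

/-- `H` satisfies the Π-property in `G`: for every chief factor `L/K` of `G`,
every prime dividing `|G/K : N_{G/K}(HK/K ∩ L/K)|` divides `|HK/K ∩ L/K|`. -/
def PiProperty {G : Type*} [Group G] (H : Subgroup G) : Prop :=
  ∀ (K L : Subgroup G) (hK : K.Normal), IsChiefFactor K L hK →
    (letI := hK;
      ∀ q : ℕ, q.Prime →
        q ∣ (Subgroup.normalizer
              (((H.map (QuotientGroup.mk' K) ⊓ L.map (QuotientGroup.mk' K) : Subgroup (G ⧸ K))) :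
                Set (G ⧸ K))).index →
        q ∣ Nat.card ↥(H.map (QuotientGroup.mk' K) ⊓ L.map (QuotientGroup.mk' K)))

/-- `G` is `p`-soluble: every chief factor is a `p`-group or a `p'`-group. -/
def PSoluble (p : ℕ) (G : Type*) [Group G] : Prop :=
  ∀ (K L : Subgroup G) (hK : K.Normal), IsChiefFactor K L hK →
    (letI := hK;
      IsPGroup p ↥(L.map (QuotientGroup.mk' K)) ∨
      ¬ p ∣ Nat.card ↥(L.map (QuotientGroup.mk' K)))

/-- `G` is `p`-supersoluble: `p`-soluble and every chief factor of order divisible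
by `p` has order exactly `p`. -/
def PSupersoluble (p : ℕ) (G : Type*) [Group G] : Prop :=
  PSoluble p G ∧
  ∀ (K L : Subgroup G) (hK : K.Normal), IsChiefFactor K L hK →
    (letI := hK;
      p ∣ Nat.card ↥(L.map (QuotientGroup.mk' K)) →
      Nat.card ↥(L.map (QuotientGroup.mk' K)) = p)

/-- `G` is `p`-nilpotent: it has a normal subgroup of order coprime to `p`
whose index is a power of `p`. -/
def PNilpotent (p : ℕ) (G : Type*) [Group G] : Prop :=
  ∃ N : Subgroup G, N.Normal ∧ Nat.Coprime (Nat.card N) p ∧ ∃ k : ℕ, N.index = p ^ k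

/-- The Frattini subgroup: the intersection of all maximal subgroups. -/
def frattiniSubgroup (H : Type*) [Group H] : Subgroup H :=
  sInf {M : Subgroup H | IsCoatom M}

/-- `O^p(G)`: the smallest normal subgroup of `G` with `p`-group quotient. -/
def pResidual (p : ℕ) (G : Type*) [Group G] : Subgroup G :=
  sInf {N : Subgroup G | N.Normal ∧ ∀ g : G, ∃ k : ℕ, g ^ p ^ k ∈ N}

/-- `T` is subnormal in `G`. -/
def IsSubnormal {G : Type*} [Group G] (T : Subgroup G) : Prop :=
  ∃ (n : ℕ) (c : Fin (n + 1) → Subgroup G), c 0 = T ∧ c (Fin.last n) = ⊤ ∧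
    ∀ i : Fin n, c i.castSucc ≤ c i.succ ∧ ((c i.castSucc).subgroupOf (c i.succ)).Normal

/-- Two subgroups permute: `AB = BA` as sets. -/
def Permutes {G : Type*} [Group G] (A B : Subgroup G) : Prop :=
  (A : Set G) * (B : Set G) = (B : Set G) * (A : Set G)

/-- `H` is S-semipermutable in `G`: `H` permutes with every Sylow `q`-subgroup of `G`
for every prime `q` not dividing `|H|`. -/
def SSemipermutable {G : Type*} [Group G] (H : Subgroup G) : Prop :=
  ∀ q : ℕ, q.Prime → ¬ q ∣ Nat.card H → ∀ Q : Sylow q G, Permutes H Q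

section AuxPi

variable {G : Type*} {Q : Type*} [Group G] [Group Q]

private lemma aux_map_inf_of_ker_le (f : G →* Q) {A B : Subgroup G} (hB : f.ker ≤ B) :
    (A ⊓ B).map f = A.map f ⊓ B.map f := by
  apply le_antisymm
  · exact le_inf (Subgroup.map_mono inf_le_left) (Subgroup.map_mono inf_le_right)
  · rintro x hx
    obtain ⟨hx1, hx2⟩ := Subgroup.mem_inf.mp hx
    obtain ⟨a, ha, rfl⟩ := hx1
    refine ⟨a, Subgroup.mem_inf.mpr ⟨ha, ?_⟩, rfl⟩
    have : a ∈ (B.map f).comap f := hx2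
    rwa [Subgroup.comap_map_eq, sup_eq_left.mpr hB] at this

private lemma aux_mem_map_iff (f : G →* Q) {S : Subgroup G} (hS : f.ker ≤ S) (g : G) :
    g ∈ S ↔ f g ∈ S.map f := by
  constructor
  · exact fun hg => ⟨g, hg, rfl⟩
  · intro hg
    have : g ∈ (S.map f).comap f := hg
    rwa [Subgroup.comap_map_eq, sup_eq_left.mpr hS] at this

private lemma aux_comap_normalizer_map (f : G →* Q) (hf : Function.Surjective f)
    {S : Subgroup G} (hS : f.ker ≤ S) :
    (Subgroup.normalizer (S.map f : Set Q)).comap f = Subgroup.normalizer (S : Set G) := by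
  ext g
  simp only [Subgroup.mem_comap, Subgroup.mem_normalizer_iff, SetLike.mem_coe]
  constructor
  · intro hg n
    rw [aux_mem_map_iff f hS n, aux_mem_map_iff f hS (g * n * g⁻¹)]
    have := hg (f n)
    simpa [map_mul, map_inv] using this
  · intro hg y
    obtain ⟨n, rfl⟩ := hf y
    have h1 : f g * f n * (f g)⁻¹ = f (g * n * g⁻¹) := by
      simp [map_mul, map_inv]
    rw [h1, ← aux_mem_map_iff f hS n, ← aux_mem_map_iff f hS (g * n * g⁻¹)]
    exact hg n

private lemma aux_normalizer_bot : Subgroup.normalizer ((⊥ : Subgroup G) : Set G) = ⊤ := by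
  ext g
  simp only [Subgroup.mem_top, iff_true, Subgroup.mem_normalizer_iff,
    SetLike.mem_coe, Subgroup.mem_bot]
  intro n
  constructor
  · rintro rfl; simp
  · intro hn
    have : g⁻¹ * (g * n * g⁻¹) * g = n := by group
    rw [← this, hn]; simp

private lemma aux_normalizer_sup_le {E K₁ K : Subgroup G} (hKn : K.Normal) (hle : K₁ ≤ K) :
    Subgroup.normalizer ((E ⊔ K₁ : Subgroup G) : Set G) ≤
      Subgroup.normalizer ((E ⊔ K : Subgroup G) : Set G) := by
  haveI := hKn
  have hEK : E ⊔ K = (E ⊔ K₁) ⊔ K := by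
    rw [sup_assoc, sup_eq_right.mpr hle]
  have key : ∀ g ∈ Subgroup.normalizer ((E ⊔ K₁ : Subgroup G) : Set G), ∀ x ∈ E ⊔ K, g * x * g⁻¹ ∈ E ⊔ K := by
    intro g hg x hx
    have hx' : x ∈ (↑((E ⊔ K₁) ⊔ K) : Set G) := by rw [← hEK]; exact hx
    rw [Subgroup.mul_normal] at hx'
    obtain ⟨a, ha, k, hk, rfl⟩ := hx'
    have h1 : g * a * g⁻¹ ∈ E ⊔ K₁ := (Subgroup.mem_normalizer_iff.mp hg a).mp ha
    have h2 : g * k * g⁻¹ ∈ K := hKn.conj_mem k hk g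
    have h3 : g * (a * k) * g⁻¹ = (g * a * g⁻¹) * (g * k * g⁻¹) := by group
    rw [hEK, h3]
    exact mul_mem (Subgroup.mem_sup_left h1) (Subgroup.mem_sup_right h2)
  intro g hg
  rw [Subgroup.mem_normalizer_iff]
  intro x
  constructor
  · exact key g hg x
  · intro hx
    have := key g⁻¹ (inv_mem hg) _ hx
    have h2 : g⁻¹ * (g * x * g⁻¹) * g⁻¹⁻¹ = x := by group
    rwa [h2] at this

end AuxPi

theorem stmt4 {G : Type*} [Group G] [Finite G] (p : ℕ) (hp : p.Prime)
    (hdvd : p ∣ Nat.card G) (H N : Subgroup G) (hH : IsPGroup p H) (hN : N.Normal)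
    (h : PiProperty H) : PiProperty (H ⊓ N) := by
  haveI : Fact p.Prime := ⟨hp⟩
  intro K L hK hCF q hq hqdvd
  letI := hK
  obtain ⟨hLn, hKL, hMn, hMne, hMmin⟩ := hCF
  have hkπ : (QuotientGroup.mk' K).ker = K := QuotientGroup.ker_mk' K
  have hπs : Function.Surjective (QuotientGroup.mk' K) := QuotientGroup.mk'_surjective K
  have hkerL : (QuotientGroup.mk' K).ker ≤ L := by rw [hkπ]; exact hKL
  have h1 : (H ⊓ N).map (QuotientGroup.mk' K) ⊓ L.map (QuotientGroup.mk' K)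
      = ((H ⊓ N) ⊓ L).map (QuotientGroup.mk' K) :=
    (aux_map_inf_of_ker_le (QuotientGroup.mk' K) hkerL).symm
  rw [h1] at hqdvd ⊢
  by_cases hbot : (H ⊓ N ⊓ L).map (QuotientGroup.mk' K) = ⊥
  · rw [hbot, aux_normalizer_bot, Subgroup.index_top, Nat.dvd_one] at hqdvd
    exact absurd hqdvd hq.ne_one
  · -- the intersection is nontrivial
    have hEnK : ¬ (H ⊓ N ⊓ L ≤ K) := by
      intro hle
      exact hbot ((Subgroup.map_eq_bot_iff _).mpr (by rw [hkπ]; exact hle))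
    obtain ⟨e, heE, heK⟩ := SetLike.not_le_iff_exists.mp hEnK
    have heN : e ∈ N := (Subgroup.mem_inf.mp (Subgroup.mem_inf.mp heE).1).2
    have heL : e ∈ L := (Subgroup.mem_inf.mp heE).2
    -- set up the chief factor (N ⊓ K, N ⊓ L)
    haveI hK' : (N ⊓ K).Normal := by
      constructor
      intro x hx g
      obtain ⟨hx1, hx2⟩ := Subgroup.mem_inf.mp hx
      exact Subgroup.mem_inf.mpr ⟨hN.conj_mem x hx1 g, hK.conj_mem x hx2 g⟩
    have hL'n : (N ⊓ L).Normal := by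
      constructor
      intro x hx g
      obtain ⟨hx1, hx2⟩ := Subgroup.mem_inf.mp hx
      exact Subgroup.mem_inf.mpr ⟨hN.conj_mem x hx1 g, hLn.conj_mem x hx2 g⟩
    have hkπ' : (QuotientGroup.mk' (N ⊓ K)).ker = N ⊓ K := QuotientGroup.ker_mk' _
    have hπ's : Function.Surjective (QuotientGroup.mk' (N ⊓ K)) :=
      QuotientGroup.mk'_surjective _
    have hK'L' : (N ⊓ K) ≤ (N ⊓ L) := inf_le_inf_left N hKL
    have hkerL' : (QuotientGroup.mk' (N ⊓ K)).ker ≤ N ⊓ L := by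
      rw [hkπ']; exact hK'L'
    have hCF' : IsChiefFactor (N ⊓ K) (N ⊓ L) hK' := by
      refine ⟨hL'n, hK'L', hL'n.map _ hπ's, ?_, ?_⟩
      · -- nontrivial
        intro hb
        have : N ⊓ L ≤ N ⊓ K := by
          have := (Subgroup.map_eq_bot_iff _).mp hb
          rwa [hkπ'] at this
        exact heK (Subgroup.mem_inf.mp (this (Subgroup.mem_inf.mpr ⟨heN, heL⟩))).2
      · -- minimality
        intro M' hM'n hM'le
        set P := M'.comap (QuotientGroup.mk' (N ⊓ K)) with hP
        have hPn : P.Normal := hM'n.comap _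
        have hPL' : P ≤ N ⊓ L := by
          have h2 : P ≤ ((N ⊓ L).map (QuotientGroup.mk' (N ⊓ K))).comap
              (QuotientGroup.mk' (N ⊓ K)) := Subgroup.comap_mono hM'le
          rwa [Subgroup.comap_map_eq, hkπ', sup_eq_left.mpr hK'L'] at h2
        have hMP : P.map (QuotientGroup.mk' (N ⊓ K)) = M' :=
          Subgroup.map_comap_eq_self_of_surjective hπ's M'
        rcases hMmin (P.map (QuotientGroup.mk' K)) (hPn.map _ hπs)
            (Subgroup.map_mono (hPL'.trans inf_le_right)) with hc | hc
        · left
          have hPK : P ≤ K := by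
            have := (Subgroup.map_eq_bot_iff _).mp hc
            rwa [hkπ] at this
          have hPK' : P ≤ N ⊓ K := le_inf (hPL'.trans inf_le_left) hPK
          rw [← hMP]
          exact (Subgroup.map_eq_bot_iff _).mpr (by rw [hkπ']; exact hPK')
        · right
          have hPKL : P ⊔ K = L := by
            have h3 := congrArg (Subgroup.comap (QuotientGroup.mk' K)) hc
            rwa [Subgroup.comap_map_eq, Subgroup.comap_map_eq, hkπ,
              sup_eq_left.mpr hKL] at h3
          have hL'le : N ⊓ L ≤ P ⊔ (N ⊓ K) := by
            intro x hx
            obtain ⟨hxN, hxL⟩ := Subgroup.mem_inf.mp hx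
            have hx' : x ∈ (↑(P ⊔ K) : Set G) := by rw [hPKL]; exact hxL
            rw [Subgroup.mul_normal] at hx'
            obtain ⟨a, ha, k, hk, rfl⟩ := hx'
            have haN : a ∈ N := (Subgroup.mem_inf.mp (hPL' ha)).1
            have hkN : k ∈ N := by
              have := mul_mem (inv_mem haN) hxN
              rwa [inv_mul_cancel_left] at this
            exact mul_mem (Subgroup.mem_sup_left ha)
              (Subgroup.mem_sup_right (Subgroup.mem_inf.mpr ⟨hkN, hk⟩))
          rw [← hMP]
          refine le_antisymm (Subgroup.map_mono hPL') ?_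
          calc (N ⊓ L).map (QuotientGroup.mk' (N ⊓ K))
              ≤ (P ⊔ (N ⊓ K)).map (QuotientGroup.mk' (N ⊓ K)) := Subgroup.map_mono hL'le
            _ = P.map (QuotientGroup.mk' (N ⊓ K)) := by
                rw [Subgroup.map_sup,
                  (Subgroup.map_eq_bot_iff _).mpr (by rw [hkπ'] : N ⊓ K ≤ _), sup_bot_eq]
    -- apply the Π-property of H to the chief factor (N ⊓ K, N ⊓ L)
    have key := h (N ⊓ K) (N ⊓ L) hK' hCF' q hq
    have h2 : H.map (QuotientGroup.mk' (N ⊓ K)) ⊓ (N ⊓ L).map (QuotientGroup.mk' (N ⊓ K))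
        = (H ⊓ N ⊓ L).map (QuotientGroup.mk' (N ⊓ K)) := by
      rw [← aux_map_inf_of_ker_le (QuotientGroup.mk' (N ⊓ K)) hkerL', ← inf_assoc]
    rw [h2] at key
    -- index comparison
    have hmapEK : ∀ (K₀ : Subgroup G) (hK₀ : K₀.Normal),
        ∀ (hs : Function.Surjective (QuotientGroup.mk' K₀)) (hEk : (QuotientGroup.mk' K₀).ker ≤ (H ⊓ N ⊓ L) ⊔ K₀),
        (Subgroup.normalizer ((H ⊓ N ⊓ L).map (QuotientGroup.mk' K₀) : Set (G ⧸ K₀))).index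
          = (Subgroup.normalizer (((H ⊓ N ⊓ L) ⊔ K₀ : Subgroup G) : Set G)).index := by
      intro K₀ hK₀ hs hEk
      letI := hK₀
      have hmap : ((H ⊓ N ⊓ L) ⊔ K₀).map (QuotientGroup.mk' K₀)
          = (H ⊓ N ⊓ L).map (QuotientGroup.mk' K₀) := by
        rw [Subgroup.map_sup,
          (Subgroup.map_eq_bot_iff _).mpr (le_of_eq (QuotientGroup.ker_mk' K₀).symm), sup_bot_eq]
      have hidx := Subgroup.index_comap_of_surjective
        (H := Subgroup.normalizer (((H ⊓ N ⊓ L) ⊔ K₀).map (QuotientGroup.mk' K₀) : Set (G ⧸ K₀))) hs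
      rw [aux_comap_normalizer_map (QuotientGroup.mk' K₀) hs hEk, hmap] at hidx
      exact hidx.symm
    have hkerEK : (QuotientGroup.mk' K).ker ≤ (H ⊓ N ⊓ L) ⊔ K := by
      rw [hkπ]; exact le_sup_right
    have hkerEK' : (QuotientGroup.mk' (N ⊓ K)).ker ≤ (H ⊓ N ⊓ L) ⊔ (N ⊓ K) := by
      rw [hkπ']; exact le_sup_right
    have hidx1 := hmapEK K hK hπs hkerEK
    have hidx2 := hmapEK (N ⊓ K) hK' hπ's hkerEK'
    have hmono : (Subgroup.normalizer (((H ⊓ N ⊓ L) ⊔ K : Subgroup G) : Set G)).index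
        ∣ (Subgroup.normalizer (((H ⊓ N ⊓ L) ⊔ (N ⊓ K) : Subgroup G) : Set G)).index :=
      Subgroup.index_dvd_of_le (aux_normalizer_sup_le hK inf_le_right)
    have hq2 : q ∣ (Subgroup.normalizer ((H ⊓ N ⊓ L).map (QuotientGroup.mk' (N ⊓ K)) :
        Set (G ⧸ (N ⊓ K)))).index := by
      rw [hidx2]
      exact dvd_trans (by rw [← hidx1]; exact hqdvd) hmono
    have hqcard := key hq2
    -- q = p since the target is a p-group
    have hEH : H ⊓ N ⊓ L ≤ H := inf_le_left.trans inf_le_left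
    have hpg' : IsPGroup p ((H ⊓ N ⊓ L).map (QuotientGroup.mk' (N ⊓ K))) :=
      (hH.to_le hEH).map _
    obtain ⟨n, hn⟩ := IsPGroup.iff_card.mp hpg'
    have hqp : q = p := by
      rw [hn] at hqcard
      exact (Nat.prime_dvd_prime_iff_eq hq hp).mp (hq.dvd_of_dvd_pow hqcard)
    have hpgπ : IsPGroup p ((H ⊓ N ⊓ L).map (QuotientGroup.mk' K)) :=
      (hH.to_le hEH).map _
    obtain ⟨m, hm⟩ := IsPGroup.iff_card.mp hpgπ
    have hm0 : m ≠ 0 := by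
      intro h0
      rw [h0, pow_zero] at hm
      exact hbot (Subgroup.card_eq_one.mp hm)
    rw [hqp, hm]
    exact dvd_pow_self p hm0
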